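/- For each i ∈ {0,1,2,3} define signs (s_i, t_i) = (+,+),(+,−),(−,+),(−,−) respectively, and for a 2×2 matrix M define M^{i0}, M^{i1}, M^{i2}, M^{i3} as in the paper (e.g. M^{03} = A_4ᵀM, M^{13} = A_5 M, M^{23} = A_6 M, M^{33} = A_4 M; M^{i0} = 4A_1 M; etc.). Then as polynomials in x, y: tr(A^{s_i(1+x)} B^{t_i(1+y)} M) = (−1)^{τ(i)} ( xy·tr(M^{i0}) + x·tr(M^{i1}) + y·tr(M^{i2}) + tr(M^{i3}) ), where τ(0)=τ(3)=1 and τ(1)=τ(2)=0. -/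
import Mathlib

open Matrix MvPolynomial
set_option maxHeartbeats 2000000

/-- The four trace identities: for each choice of signs (s,t) = (+,+),(+,−),(−,+),(−,−),
tr(A^{s(1+x)} B^{t(1+y)} M) = (−1)^{τ} ( xy·tr(M^{i0}) + x·tr(M^{i1}) + y·tr(M^{i2}) + tr(M^{i3}) ),
with τ = 1 for (+,+),(−,−) and τ = 0 for (+,−),(−,+), over ℤ[x,y] with x = X 0, y = X 1. -/
theorem stmt_17
    (A1 A2 A3 A4 A5 A6 : Matrix (Fin 2) (Fin 2) ℤ)
    (h1 : A1 = !![1, 0; 0, 0]) (h2 : A2 = !![2, 1; 0, 0])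
    (h3 : A3 = !![2, -1; 0, 0]) (h4 : A4 = !![3, 2; -2, -1])
    (h5 : A5 = !![5, 2; 2, 1]) (h6 : A6 = !![5, -2; -2, 1])
    (M : Matrix (Fin 2) (Fin 2) ℤ) :
    (Matrix.trace ((!![1, 2 * (1 + X 0); 0, 1] : Matrix (Fin 2) (Fin 2) (MvPolynomial (Fin 2) ℤ)) *
        !![1, 0; -2 * (1 + X 1), 1] * M.map C) =
      -(X 0 * X 1 * C (Matrix.trace ((4 • A1) * M)) + X 0 * C (Matrix.trace ((2 • A3) * M)) +
        X 1 * C (Matrix.trace ((2 • A2ᵀ) * M)) + C (Matrix.trace (A4ᵀ * M)))) ∧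
    (Matrix.trace ((!![1, 2 * (1 + X 0); 0, 1] : Matrix (Fin 2) (Fin 2) (MvPolynomial (Fin 2) ℤ)) *
        !![1, 0; 2 * (1 + X 1), 1] * M.map C) =
      X 0 * X 1 * C (Matrix.trace ((4 • A1) * M)) + X 0 * C (Matrix.trace ((2 • A2) * M)) +
        X 1 * C (Matrix.trace ((2 • A2ᵀ) * M)) + C (Matrix.trace (A5 * M))) ∧
    (Matrix.trace ((!![1, -2 * (1 + X 0); 0, 1] : Matrix (Fin 2) (Fin 2) (MvPolynomial (Fin 2) ℤ)) *
        !![1, 0; -2 * (1 + X 1), 1] * M.map C) =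
      X 0 * X 1 * C (Matrix.trace ((4 • A1) * M)) + X 0 * C (Matrix.trace ((2 • A3) * M)) +
        X 1 * C (Matrix.trace ((2 • A3ᵀ) * M)) + C (Matrix.trace (A6 * M))) ∧
    (Matrix.trace ((!![1, -2 * (1 + X 0); 0, 1] : Matrix (Fin 2) (Fin 2) (MvPolynomial (Fin 2) ℤ)) *
        !![1, 0; 2 * (1 + X 1), 1] * M.map C) =
      -(X 0 * X 1 * C (Matrix.trace ((4 • A1) * M)) + X 0 * C (Matrix.trace ((2 • A2) * M)) +
        X 1 * C (Matrix.trace ((2 • A3ᵀ) * M)) + C (Matrix.trace (A4 * M)))) := by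
  subst h1 h2 h3 h4 h5 h6
  refine ⟨?_, ?_, ?_, ?_⟩ <;>
  · simp only [Matrix.trace, Matrix.mul_apply, Fin.sum_univ_two, Matrix.diag,
      Matrix.smul_apply, Matrix.transpose_apply, Matrix.map_apply, Matrix.of_apply,
      Matrix.cons_val', Matrix.cons_val_zero, Matrix.cons_val_one, Matrix.head_cons,
      Matrix.empty_val', Matrix.cons_val_fin_one, Matrix.head_fin_const,
      smul_eq_mul, map_add, _root_.map_mul, map_intCast, map_neg, _root_.map_one,
      map_ofNat]
    norm_num
    ring
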